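/- Visitable paths of a shift: for a negative behaviour A of base ξi ⊢, the visitable paths of the positive shift ↑A (of base ⊢ ξ) are exactly the daimon together with the paths (+, ξ, {i})·p for p a visitable path of A; i.e. V_{↑A} = {✠} ∪ (+,ξ,{i})·V_A. -/

import Mathlib

namespace Ludics

abbrev Address := List ℕ

/-- An action of Ludics: the daimon, or a proper action given by a polarity
(`true` = positive), a focus address and a ramification. -/
inductive Action where
  | daimon : Action
  | proper (pos : Bool) (focus : Address) (ram : Finset ℕ) : Action
deriving DecidableEq

namespace Action

def isPositive : Action → Bool
  | daimon => true
  | proper pos _ _ => pos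

def focus? : Action → Option Address
  | daimon => none
  | proper _ ξ _ => some ξ

/-- Reverse the polarity of an action. -/
def dual : Action → Action
  | daimon => daimon
  | proper pos ξ I => proper (!pos) ξ I

/-- `a.justifiesB b` : the focus of `b` is one of the addresses created by `a`. -/
def justifiesB : Action → Action → Bool
  | proper _ ξ I, proper _ ζ _ => decide (∃ i ∈ I, ζ = ξ ++ [i])
  | _, _ => false

def justifies (a b : Action) : Prop := a.justifiesB b = true

end Action

/-- A sequent of a base: an optional left address (at most one) and a finite
set of right addresses. -/
structure Sequent where
  left : Option Address
  right : Finset Address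

abbrev Base := List Sequent

def Base.isPositive (β : Base) : Prop := ∃ σ ∈ β, σ.left = none

/-- An action is initial w.r.t. a base if its focus belongs to the base
(on the side corresponding to its polarity). -/
def Initial (β : Base) (a : Action) : Prop :=
  ∃ pol ξ I, a = .proper pol ξ I ∧
    ∃ σ ∈ β, (pol = true ∧ ξ ∈ σ.right) ∨ (pol = false ∧ σ.left = some ξ)

/-- A sequent "owns" an action when its focus is hereditarily justified by an
address of the sequent (i.e. extends an address of the sequent). -/
def Sequent.owns (σ : Sequent) (a : Action) : Prop :=
  ∃ ξ, a.focus? = some ξ ∧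
    ((∃ γ, σ.left = some γ ∧ γ <+: ξ) ∨ (∃ δ ∈ σ.right, δ <+: ξ))

def Sequent.addresses (σ : Sequent) : Set Address :=
  (match σ.left with | some γ => {γ} | none => ∅) ∪ ↑σ.right

def Base.addresses (β : Base) : Set Address :=
  {a | ∃ σ ∈ β, a ∈ σ.addresses}

/-- The dual base: each sequent `Γ ⊢ Δ` gives sequents `⊢ Γ` and `δ ⊢` for δ ∈ Δ. -/
noncomputable def Sequent.dualSequents (σ : Sequent) : List Sequent :=
  (match σ.left with
    | some γ => [⟨none, ({γ} : Finset Address)⟩]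
    | none => []) ++
    σ.right.toList.map fun δ => ⟨some δ, (∅ : Finset Address)⟩

noncomputable def Base.dual (β : Base) : Base := (β.map Sequent.dualSequents).flatten

/-- View of a sequence, computed on the reversed sequence (most recent action
first), with fuel. -/
def viewRevAux : ℕ → List Action → List Action
  | 0, _ => []
  | _ + 1, [] => []
  | n + 1, a :: w =>
    if a.isPositive then a :: viewRevAux n w
    else a :: viewRevAux n (w.dropWhile fun b => !(b.justifiesB a))

def viewRev (s : List Action) : List Action := viewRevAux s.length s

/-- The view `⌜s⌝` of a sequence of actions. -/
def view (s : List Action) : List Action := (viewRev s.reverse).reverse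

/-- `p` is a path based on `β`. -/
structure IsPath (β : Base) (p : List Action) : Prop where
  alternating : p.Chain' fun a b => a.isPositive ≠ b.isPositive
  justified : ∀ w a, w ++ [a] <+: p → a ≠ Action.daimon →
    Initial β a ∨ ∃ b ∈ w, b.justifies a
  negJump : ∀ w a b, w ++ [a] <+: p → a.isPositive = true → b ∈ w →
    b.justifies a → b ∈ view w
  posJump : ∀ w a, w ++ [a] <+: p → a.isPositive = true → a ≠ Action.daimon →
    ∀ σ ∈ β, (∃ f, a.focus? = some f ∧ f ∈ σ.right) →
      (w = [] ∧ σ.left = none) ∨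
      ∃ w' b, w = w' ++ [b] ∧ b.isPositive = false ∧ σ.owns b
  linearity : (p.filterMap Action.focus?).Nodup
  daimonLast : ∀ w, w ++ [Action.daimon] <+: p → w ++ [Action.daimon] = p
  daimonFirst : p.head? = some Action.daimon → β.isPositive
  totality : β.isPositive → ∃ a t, p = a :: t ∧
    (a = Action.daimon ∨ (a.isPositive = true ∧ Initial β a))

/-- A chronicle: a non-empty path where each non-initial negative action is
justified by the immediately preceding action. -/
def IsChronicle (β : Base) (c : List Action) : Prop :=
  IsPath β c ∧ c ≠ [] ∧
    ∀ w a b, w ++ [a, b] <+: c → b.isPositive = false →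
      Initial β b ∨ a.justifies b

/-- The dual of a positive-ended sequence: reverse all polarities, removing a
final daimon if present and appending one otherwise. -/
def dualSeq (p : List Action) : List Action :=
  if p.getLast? = some Action.daimon then p.dropLast.map Action.dual
  else p.map Action.dual ++ [Action.daimon]

/-- Positive-ended (possibly empty) sequence. -/
def PosEnded (p : List Action) : Prop :=
  p = [] ∨ ∃ a, p.getLast? = some a ∧ a.isPositive = true

/-- A (non-empty) negative-starting, positive-ended block. -/
def NegBlock (b : List Action) : Prop :=
  b ≠ [] ∧ (∀ a, b.head? = some a → a.isPositive = false) ∧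
    ∀ a, b.getLast? = some a → a.isPositive = true

def EndsWithDaimon (p : List Action) : Prop := p.getLast? = some Action.daimon

/-- Basic shuffle of two positive-ended negative paths: interleaving by
positive-ended negative blocks; if the last `p`-block ends with the daimon
then the last `q`-block is empty. -/
def ShuffleNeg (p q r : List Action) : Prop :=
  ∃ ps qs : List (List Action),
    ps.length = qs.length ∧
    (∀ b ∈ ps, b = [] ∨ NegBlock b) ∧
    (∀ b ∈ qs, b = [] ∨ NegBlock b) ∧
    ps.flatten = p ∧ qs.flatten = q ∧
    (List.zipWith (· ++ ·) ps qs).flatten = r ∧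
    (EndsWithDaimon (ps.getLast?.getD []) → qs.getLast?.getD [] = [])

/-- The shuffle `r ∈ p ⧢ q`, including the extensions to two daimon-ended
paths and to paths with a common positive-ended prefix. -/
inductive Shuffle : List Action → List Action → List Action → Prop where
  | base {p q r} : ShuffleNeg p q r → Shuffle p q r
  | daiLeft {p q r} {κ₁ κ₂ : Action} :
      Shuffle (p ++ [κ₁, Action.daimon]) q r →
      Shuffle (p ++ [κ₁, Action.daimon]) (q ++ [κ₂, Action.daimon]) r
  | daiRight {p q r} {κ₁ κ₂ : Action} :
      Shuffle p (q ++ [κ₂, Action.daimon]) r →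
      Shuffle (p ++ [κ₁, Action.daimon]) (q ++ [κ₂, Action.daimon]) r
  | pre {s p q r} : s ≠ [] → PosEnded s → Shuffle p q r →
      Shuffle (s ++ p) (s ++ q) (s ++ r)

/-- Shuffle closure of a set of (positive-ended) paths. -/
inductive ShuffleClosure (P : Set (List Action)) : List Action → Prop where
  | mem {p} : p ∈ P → ShuffleClosure P p
  | shuffle {p q r} : ShuffleClosure P p → ShuffleClosure P q →
      Shuffle p q r → ShuffleClosure P r

/-- Coherence of chronicles: comparability and propagation. -/
def Coherent (c₁ c₂ : List Action) : Prop :=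
  (∀ w κ₁ κ₂, w ++ [κ₁] <+: c₁ → w ++ [κ₂] <+: c₂ →
      κ₁ = κ₂ ∨ (κ₁.isPositive = false ∧ κ₂.isPositive = false)) ∧
  (∀ w ξ₁ I₁ w₁ σ₁ ξ₂ I₂ w₂ σ₂,
      w ++ Action.proper false ξ₁ I₁ :: w₁ ++ [σ₁] <+: c₁ →
      w ++ Action.proper false ξ₂ I₂ :: w₂ ++ [σ₂] <+: c₂ →
      ξ₁ ≠ ξ₂ → ∀ f, σ₁.focus? = some f → σ₂.focus? ≠ some f)

/-- A design, as a prefix-closed clique of chronicles. -/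
structure IsDesign (β : Base) (D : Set (List Action)) : Prop where
  chron : ∀ c ∈ D, IsChronicle β c
  prefixClosed : ∀ c ∈ D, ∀ d, d <+: c → d ≠ [] → d ∈ D
  coherent : ∀ c ∈ D, ∀ d ∈ D, Coherent c d
  maxPos : ∀ c ∈ D, (∀ κ, c ++ [κ] ∉ D) →
    ∃ a, c.getLast? = some a ∧ a.isPositive = true
  posNonempty : β.isPositive → D.Nonempty

/-- A net of designs, abusively seen as its set of chronicles. -/
structure IsNet (β : Base) (R : Set (List Action)) : Prop where
  chron : ∀ c ∈ R, IsChronicle β c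
  prefixClosed : ∀ c ∈ R, ∀ d, d <+: c → d ≠ [] → d ∈ R

/-- `p` is a path of the design/net `D`: each view of each non-empty prefix of
`p` is a chronicle of `D`. -/
def PathOf (β : Base) (D : Set (List Action)) (p : List Action) : Prop :=
  IsPath β p ∧ ∀ q, q <+: p → q ≠ [] → view q ∈ D

/-- Whose turn it is in normalization: `dpos` says whether the design `D` owns
the first (positive) move; afterwards `D` moves exactly after negative actions. -/
def TurnD (dpos : Prop) (s : List Action) : Prop :=
  match s.getLast? with
  | none => dpos
  | some a => a.isPositive = false

/-- Interaction (normalization) between a design `D` and a counter-net `R`,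
described by its visited sequence `s` (seen from `D`): it converges from
state `s` if the design to move plays the daimon, or it plays a proper
positive action accepted (in dual form) by the other one, and the interaction
converges from the extended state. -/
inductive Conv (D R : Set (List Action)) (dpos : Prop) : List Action → Prop where
  | daiD {s} : TurnD dpos s → view (s ++ [Action.daimon]) ∈ D → Conv D R dpos s
  | daiR {s} : ¬ TurnD dpos s →
      view (s.map Action.dual ++ [Action.daimon]) ∈ R → Conv D R dpos s
  | stepD {s κ} : TurnD dpos s → κ.isPositive = true → κ ≠ Action.daimon →
      view (s ++ [κ]) ∈ D → view ((s ++ [κ]).map Action.dual) ∈ R →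
      Conv D R dpos (s ++ [κ]) → Conv D R dpos s
  | stepR {s κ} : ¬ TurnD dpos s → κ.isPositive = false →
      view ((s ++ [κ]).map Action.dual) ∈ R → view (s ++ [κ]) ∈ D →
      Conv D R dpos (s ++ [κ]) → Conv D R dpos s

/-- The simple base `⊢ ξ` (positive) or `ξ ⊢` (negative). -/
def simpleBase (ξ : Address) (pos : Bool) : Base :=
  if pos then [⟨none, {ξ}⟩] else [⟨some ξ, ∅⟩]

/-- The orthogonal of a set of designs on a simple base. -/
def orthSet (ξ : Address) (pos : Bool) (A : Set (Set (List Action))) :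
    Set (Set (List Action)) :=
  {E | IsDesign (simpleBase ξ !pos) E ∧
    ∀ D ∈ A, if pos then Conv D E True [] else Conv E D True []}

def biorth (ξ : Address) (pos : Bool) (A : Set (Set (List Action))) :
    Set (Set (List Action)) :=
  orthSet ξ (!pos) (orthSet ξ pos A)

/-- A behaviour: a bi-orthogonally closed set of designs on a simple base. -/
structure Behaviour (ξ : Address) (pos : Bool) where
  designs : Set (Set (List Action))
  isDesign : ∀ D ∈ designs, IsDesign (simpleBase ξ pos) D
  closed : designs = biorth ξ pos designs

/-- Visitable paths of a set of designs: traces of convergent normalizations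
with the orthogonal, characterized as the dual pairs of paths. -/
def VisitableSet (ξ : Address) (pos : Bool) (S : Set (Set (List Action)))
    (p : List Action) : Prop :=
  ∃ D ∈ S, ∃ E ∈ orthSet ξ pos S,
    PathOf (simpleBase ξ pos) D p ∧ PathOf (simpleBase ξ !pos) E (dualSeq p)

def Visitable {ξ : Address} {pos : Bool} (A : Behaviour ξ pos)
    (p : List Action) : Prop :=
  VisitableSet ξ pos A.designs p

/-- Material (incarnated) design of a behaviour: inclusion-minimal. -/
def Material {ξ : Address} {pos : Bool} (A : Behaviour ξ pos)
    (D : Set (List Action)) : Prop :=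
  D ∈ A.designs ∧ ∀ E ∈ A.designs, E ⊆ D → E = D

/-- Completion of a design: add daimon-ended chronicles after every missing
negative action. -/
def completion (β : Base) (D : Set (List Action)) : Set (List Action) :=
  D ∪ {c' | ∃ c ∈ D, ∃ ξ I,
    (c' = c ++ [Action.proper false ξ I] ∨
      c' = c ++ [Action.proper false ξ I, Action.daimon]) ∧
    IsChronicle β (c ++ [Action.proper false ξ I, Action.daimon]) ∧
    c ++ [Action.proper false ξ I] ∉ D}

def DaiDesign : Set (List Action) := {[Action.daimon]}

def firstAction (D : Set (List Action)) (κ : Action) : Prop :=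
  ∃ c ∈ D, c.head? = some κ

/-- Directory of a set of positive designs on `⊢ ξ`. -/
def directory (ξ : Address) (A : Set (Set (List Action))) : Set (Finset ℕ) :=
  {I | ∃ D ∈ A, firstAction D (Action.proper true ξ I)}

/-- Alien positive behaviours: ramifications of first actions pairwise disjoint. -/
def Alien (ξ : Address) (A B : Behaviour ξ true) : Prop :=
  ∀ I ∈ directory ξ A.designs, ∀ J ∈ directory ξ B.designs, Disjoint I J

/-- Extension of the first action of a design by a set `J`. -/
def extDesign (ξ : Address) (J : Finset ℕ) (D : Set (List Action)) :
    Set (List Action) :=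
  {c | ∃ I t, (Action.proper true ξ I :: t) ∈ D ∧
      c = Action.proper true ξ (I ∪ J) :: t}

/-- The extension `A_[B]` of a set of designs along another. -/
def extended (ξ : Address) (A B : Set (Set (List Action))) :
    Set (Set (List Action)) :=
  insert DaiDesign
    {D' | ∃ D ∈ A, (∃ I, firstAction D (Action.proper true ξ I)) ∧
      ∃ E ∈ B, ∃ J, firstAction E (Action.proper true ξ J) ∧
        D' = extDesign ξ J D}

/-- The extension `P_[Q]` of a set of paths along another. -/
def extPaths (ξ : Address) (P Q : Set (List Action)) : Set (List Action) :=
  insert [Action.daimon]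
    {p | ∃ I t, (Action.proper true ξ I :: t) ∈ P ∧
      ∃ q ∈ Q, ∃ J, q.head? = some (Action.proper true ξ J) ∧
        p = Action.proper true ξ (I ∪ J) :: t}

/-- Prefixing a (negative) design by the positive action `(+, ξ, {i})`. -/
def shiftD (ξ : Address) (i : ℕ) (D : Set (List Action)) : Set (List Action) :=
  insert [Action.proper true ξ {i}]
    {c | ∃ d ∈ D, c = Action.proper true ξ {i} :: d}

/-- `C = ↑N` : the positive shift of the negative behaviour `N`. -/
def IsShiftOf (ξ : Address) (i : ℕ) (C : Behaviour ξ true)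
    (N : Behaviour (ξ ++ [i]) false) : Prop :=
  C.designs = biorth ξ true (shiftD ξ i '' N.designs)

/-- `C = ⊕ₖ F k`. -/
def IsSumOf {ξ : Address} {ι : Type} (C : Behaviour ξ true)
    (F : ι → Behaviour ξ true) : Prop :=
  C.designs = biorth ξ true (⋃ k, (F k).designs)

/-- Pairwise disjoint family of positive behaviours (disjoint directories). -/
def PairwiseDisjointFam {ξ : Address} {ι : Type}
    (F : ι → Behaviour ξ true) : Prop :=
  ∀ k l, k ≠ l → ∀ I ∈ directory ξ (F k).designs,
    I ∉ directory ξ (F l).designs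

open Classical in
/-- Tensor of two positive designs on `⊢ ξ`. -/
noncomputable def tensorD (ξ : Address) (D E : Set (List Action)) :
    Set (List Action) :=
  if D = DaiDesign ∨ E = DaiDesign then DaiDesign
  else {c | ∃ I J, firstAction D (Action.proper true ξ I) ∧
      firstAction E (Action.proper true ξ J) ∧
      ∃ t, ((Action.proper true ξ I :: t) ∈ D ∨
            (Action.proper true ξ J :: t) ∈ E) ∧
        c = Action.proper true ξ (I ∪ J) :: t}

/-- `C = A ⊗ B`. -/
def IsTensorOf {ξ : Address} (C A B : Behaviour ξ true) : Prop :=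
  C.designs = biorth ξ true
    {G | ∃ D ∈ A.designs, ∃ E ∈ B.designs, G = tensorD ξ D E}

/-- Hereditary chains of justifiers inside a sequence `p`. -/
inductive JustChain (β : Base) (p : List Action) : List Action → Prop where
  | init {κ} : κ ∈ p → Initial β κ → JustChain β p [κ]
  | cons {s κ κ'} : JustChain β p (s ++ [κ]) → κ' ∈ p → κ.justifies κ' →
      JustChain β p (s ++ [κ, κ'])

/-- Trivial chronicle for a behaviour: hereditary-justifier sequence of an
action of a chronicle of a material design. -/
def TrivialChronicle {ξ : Address} {pos : Bool} (A : Behaviour ξ pos)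
    (s : List Action) : Prop :=
  ∃ D, Material A D ∧ ∃ c ∈ D, JustChain (simpleBase ξ pos) c s

/-- Regular path for a behaviour: reversible path whose justifier chains are
trivial chronicles for the behaviour. -/
def RegularPath {ξ : Address} {pos : Bool} (A : Behaviour ξ pos)
    (p : List Action) : Prop :=
  IsPath (simpleBase ξ pos) p ∧ IsPath (simpleBase ξ !pos) (dualSeq p) ∧
  ∀ κ ∈ p, κ ≠ Action.daimon →
    ∃ s, JustChain (simpleBase ξ pos) p s ∧ s.getLast? = some κ ∧
      TrivialChronicle A s

/-- Regular behaviour: every regular path is visitable. -/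
def Regular {ξ : Address} {pos : Bool} (A : Behaviour ξ pos) : Prop :=
  ∀ p, RegularPath A p → Visitable A p

/-- Proper actions occurring in a design. -/
def properActs (D : Set (List Action)) : Set Action :=
  {a | a ≠ Action.daimon ∧ ∃ c ∈ D, a ∈ c}

/-- Essentially finite behaviour: finitely many material designs, all finite. -/
def EssFinite {ξ : Address} {pos : Bool} (A : Behaviour ξ pos) : Prop :=
  {D | Material A D}.Finite ∧ ∀ D, Material A D → (properActs D).Finite

/-- A slice of a design. -/
def IsSlice (D S : Set (List Action)) : Prop :=
  S ⊆ D ∧ (∀ c ∈ S, ∀ d, d <+: c → d ≠ [] → d ∈ S) ∧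
  ∀ w ξ I₁ I₂, w ++ [Action.proper false ξ I₁] ∈ S →
    w ++ [Action.proper false ξ I₂] ∈ S → I₁ = I₂

/-- Uniformly bounded behaviour: slice sizes of material designs uniformly
bounded. -/
def UnifBounded {ξ : Address} {pos : Bool} (A : Behaviour ξ pos) : Prop :=
  ∃ N : ℕ, ∀ D, Material A D → ∀ S, IsSlice D S →
    (properActs S).Finite ∧ (properActs S).ncard < N

def oneDesign (ξ : Address) : Set (List Action) :=
  {[Action.proper true ξ ∅]}

mutual
  /-- The class `C∞⁺` of positive behaviours: `0`, `1`, or a (possibly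
  infinite) nonempty sum of finite tensors of shifts of `C∞⁻` elements. -/
  inductive CInf : (ξ : Address) → Behaviour ξ true → Prop where
    | zero {ξ} (A : Behaviour ξ true) :
        A.designs = {DaiDesign} → CInf ξ A
    | one {ξ} (A : Behaviour ξ true) :
        A.designs = biorth ξ true {oneDesign ξ} → CInf ξ A
    | sum {ξ} {ι : Type} (F : ι → Behaviour ξ true) (C : Behaviour ξ true) :
        Nonempty ι → (∀ k, CInfTS ξ (F k)) → PairwiseDisjointFam F →
        IsSumOf C F → CInf ξ C
  /-- Finite tensors of positive shifts of duals of `C∞⁺` elements. -/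
  inductive CInfTS : (ξ : Address) → Behaviour ξ true → Prop where
    | shift {ξ} {i : ℕ} (C : Behaviour ξ true) (N : Behaviour (ξ ++ [i]) false)
        (P : Behaviour (ξ ++ [i]) true) :
        CInf (ξ ++ [i]) P → N.designs = orthSet (ξ ++ [i]) true P.designs →
        IsShiftOf ξ i C N → CInfTS ξ C
    | tensor {ξ} (A B C : Behaviour ξ true) :
        CInfTS ξ A → CInfTS ξ B → Alien ξ A B → IsTensorOf C A B →
        CInfTS ξ C
end

mutual
  /-- The class `C_f⁺`: as `C∞⁺` but with finite sums only. -/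
  inductive CFin : (ξ : Address) → Behaviour ξ true → Prop where
    | zero {ξ} (A : Behaviour ξ true) :
        A.designs = {DaiDesign} → CFin ξ A
    | one {ξ} (A : Behaviour ξ true) :
        A.designs = biorth ξ true {oneDesign ξ} → CFin ξ A
    | sum {ξ} {ι : Type} (F : ι → Behaviour ξ true) (C : Behaviour ξ true) :
        Nonempty ι → Finite ι → (∀ k, CFinTS ξ (F k)) → PairwiseDisjointFam F →
        IsSumOf C F → CFin ξ C
  inductive CFinTS : (ξ : Address) → Behaviour ξ true → Prop where
    | shift {ξ} {i : ℕ} (C : Behaviour ξ true) (N : Behaviour (ξ ++ [i]) false)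
        (P : Behaviour (ξ ++ [i]) true) :
        CFin (ξ ++ [i]) P → N.designs = orthSet (ξ ++ [i]) true P.designs →
        IsShiftOf ξ i C N → CFinTS ξ C
    | tensor {ξ} (A B C : Behaviour ξ true) :
        CFinTS ξ A → CFinTS ξ B → Alien ξ A B → IsTensorOf C A B →
        CFinTS ξ C
end

/-- The class `C∞⁻` : duals of `C∞⁺` elements. -/
def CInfN (ξ : Address) (B : Behaviour ξ false) : Prop :=
  ∃ A : Behaviour ξ true, CInf ξ A ∧ B.designs = orthSet ξ true A.designs

def CFinN (ξ : Address) (B : Behaviour ξ false) : Prop :=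
  ∃ A : Behaviour ξ true, CFin ξ A ∧ B.designs = orthSet ξ true A.designs


/-!
Normalization commutes with prefixing by the shift action: for `D` on `ξi ⊢` and `P` on
`⊢ ξi`, the interaction of `(+, ξ, {i}) · D` with `(-, ξ, {i}) · P` is the interaction of `P`
with `D` preceded by one step, and conversely an interaction on `ξ` that passes this first step
is one between the residuals. Views are not disturbed by the extra first action because every
action of a path on `ξi` is hereditarily justified by an action of focus `ξi`, which
`(±, ξ, {i})` justifies. Hence `(-, ξ, {i}) · P` lies in `(↑A)⊥` for `P ∈ A⊥`, every design of
`↑A` starts with `✠` or `(+, ξ, {i})`, and the residuals of `D ∈ ↑A` and of `E ∈ (↑A)⊥`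
lie in `A` and `A⊥`; visited paths are carried along by prefixing and removing the first
action.
-/

namespace Action

@[simp] lemma dual_dual (a : Action) : a.dual.dual = a := by
  cases a <;> simp [dual]

@[simp] lemma dual_comp_dual : dual ∘ dual = id := funext dual_dual

@[simp] lemma dual_proper (pos : Bool) (ξ : Address) (I : Finset ℕ) :
    (proper pos ξ I).dual = proper (!pos) ξ I := rfl

@[simp] lemma dual_eq_daimon_iff {a : Action} : a.dual = daimon ↔ a = daimon := by
  cases a <;> simp [dual]

@[simp] lemma isPositive_daimon : daimon.isPositive = true := rfl

@[simp] lemma isPositive_proper (pos : Bool) (ξ : Address) (I : Finset ℕ) :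
    (proper pos ξ I).isPositive = pos := rfl

lemma isPositive_dual {a : Action} (h : a ≠ daimon) : a.dual.isPositive = !a.isPositive := by
  cases a <;> simp_all [dual, isPositive]

lemma ne_daimon_of_isPositive_eq_false {a : Action} (h : a.isPositive = false) : a ≠ daimon := by
  rintro rfl
  simp at h

@[simp] lemma focus?_dual (a : Action) : a.dual.focus? = a.focus? := by
  cases a <;> rfl

@[simp] lemma justifies_dual_left {a b : Action} : a.dual.justifies b ↔ a.justifies b := by
  cases a <;> cases b <;> rfl

@[simp] lemma justifies_dual_right {a b : Action} : a.justifies b.dual ↔ a.justifies b := by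
  cases a <;> cases b <;> rfl

lemma justifies_iff {a b : Action} :
    a.justifies b ↔
      ∃ pa ξ I pb J, ∃ j ∈ I, a = proper pa ξ I ∧ b = proper pb (ξ ++ [j]) J := by
  cases a <;> cases b <;> simp [justifies, justifiesB]
  grind

lemma proper_singleton_justifies_iff {b : Bool} {ξ : Address} {i : ℕ} {a : Action} :
    (proper b ξ {i}).justifies a ↔ ∃ pa I, a = proper pa (ξ ++ [i]) I := by
  cases a <;> simp [justifies, justifiesB]

end Action

lemma append_singleton_prefix_cons_iff {α : Type*} {w q : List α} {a c : α} :
    w ++ [a] <+: c :: q ↔ (w = [] ∧ a = c) ∨ ∃ w', w = c :: w' ∧ w' ++ [a] <+: q := by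
  cases w <;> simp [List.cons_prefix_cons, eq_comm]

lemma mem_of_append_singleton_prefix {α : Type*} {w q : List α} {a : α} (h : w ++ [a] <+: q) :
    a ∈ q :=
  h.subset (by simp)

lemma eq_append_cons_of_append_singleton {α : Type*} {s s₁ s₂ : List α} {x a : α}
    (h : s ++ [x] = s₁ ++ a :: s₂) :
    (s₁ = s ∧ a = x) ∨ ∃ s₂', s = s₁ ++ a :: s₂' := by
  rcases List.eq_nil_or_concat s₂ with rfl | ⟨s₂', y, rfl⟩
  · exact .inl (by simpa [eq_comm] using List.append_singleton_inj.mp h)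
  · have h' : s ++ [x] = (s₁ ++ a :: s₂') ++ [y] := by simpa using h
    exact .inr ⟨s₂', (List.append_singleton_inj.mp h').1⟩

@[simp] lemma viewRevAux_nil : ∀ n, viewRevAux n [] = []
  | 0 => rfl
  | _ + 1 => rfl

lemma viewRevAux_cons_pos {n : ℕ} {a : Action} {w : List Action} (h : a.isPositive = true) :
    viewRevAux (n + 1) (a :: w) = a :: viewRevAux n w := by
  simp [viewRevAux, h]

lemma viewRevAux_cons_neg {n : ℕ} {a : Action} {w : List Action} (h : a.isPositive = false) :
    viewRevAux (n + 1) (a :: w) =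
      a :: viewRevAux n (w.dropWhile fun b => !b.justifiesB a) := by
  simp [viewRevAux, h]

lemma viewRevAux_of_length_le :
    ∀ {n m : ℕ} {u : List Action}, u.length ≤ n → u.length ≤ m → viewRevAux n u = viewRevAux m u
  | 0, _, [], _, _ | _, 0, [], _, _ => by simp
  | _ + 1, _ + 1, [], _, _ => rfl
  | n + 1, m + 1, a :: w, hn, hm => by
    simp only [List.length_cons, Nat.add_le_add_iff_right] at hn hm
    have hdrop := (List.dropWhile_sublist (fun b => !b.justifiesB a) (l := w)).length_le
    cases hp : a.isPositive
    · rw [viewRevAux_cons_neg hp, viewRevAux_cons_neg hp,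
        viewRevAux_of_length_le (hdrop.trans hn) (hdrop.trans hm)]
    · rw [viewRevAux_cons_pos hp, viewRevAux_cons_pos hp, viewRevAux_of_length_le hn hm]

lemma viewRevAux_singleton {n : ℕ} (a : Action) (h : 1 ≤ n) : viewRevAux n [a] = [a] := by
  obtain ⟨n, rfl⟩ := Nat.exists_eq_add_of_le' h
  cases hp : a.isPositive
  · simp [viewRevAux_cons_neg hp]
  · simp [viewRevAux_cons_pos hp]

lemma viewRevAux_subset : ∀ (n : ℕ) (u : List Action), viewRevAux n u ⊆ u
  | 0, _ => by simp [viewRevAux]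
  | _ + 1, [] => by simp
  | n + 1, a :: w => by
    cases hp : a.isPositive
    · rw [viewRevAux_cons_neg hp]
      exact List.cons_subset_cons _
        (List.Subset.trans (viewRevAux_subset n _) (List.dropWhile_sublist _).subset)
    · rw [viewRevAux_cons_pos hp]
      exact List.cons_subset_cons _ (viewRevAux_subset n w)

lemma viewRevAux_append_singleton (c₀ : Action) :
    ∀ (n : ℕ) (u : List Action), u.length < n →
    (∀ u₁ a u₂, u = u₁ ++ a :: u₂ → a.isPositive = false →
      (∀ b ∈ u₂, b.justifiesB a = false) → c₀.justifiesB a = true) →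
    viewRevAux n (u ++ [c₀]) = viewRevAux n u ++ [c₀]
  | 0, _, hu, _ => absurd hu (Nat.not_lt_zero _)
  | n + 1, [], _, _ => by simpa using viewRevAux_singleton c₀ (Nat.le_add_left 1 n)
  | n + 1, a :: t, hu, hcond => by
    simp only [List.length_cons, Nat.add_lt_add_iff_right] at hu
    rw [List.cons_append]
    cases hp : a.isPositive
    · rw [viewRevAux_cons_neg hp, viewRevAux_cons_neg hp, List.dropWhile_append]
      rcases hdw : t.dropWhile (fun b => !b.justifiesB a) with _ | ⟨v, vs⟩
      · have hj : c₀.justifiesB a = true := hcond [] a t rfl hp fun b hb => by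
          simpa using List.dropWhile_eq_nil_iff.mp hdw b hb
        simp only [hdw, List.isEmpty_nil, if_true]
        simp [hj, viewRevAux_singleton c₀ (Nat.one_le_of_lt hu)]
      · obtain ⟨pre, hpre⟩ := List.dropWhile_suffix (l := t) (fun b => !b.justifiesB a)
        have hlen := (List.dropWhile_sublist (fun b => !b.justifiesB a) (l := t)).length_le
        simp only [hdw, List.isEmpty_cons, Bool.false_eq_true, if_false]
        rw [← hdw, viewRevAux_append_singleton c₀ n _ (hlen.trans_lt hu)
          fun u₁ b u₂ hd => hcond (a :: pre ++ u₁) b u₂ (by rw [← hpre, hd]; simp)]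
        rfl
    · rw [viewRevAux_cons_pos hp, viewRevAux_cons_pos hp,
        viewRevAux_append_singleton c₀ n t hu
          fun u₁ b u₂ hd => hcond (a :: u₁) b u₂ (by rw [hd]; rfl)]
      rfl

@[simp] lemma view_singleton (a : Action) : view [a] = [a] := by
  simp [view, viewRev, viewRevAux_singleton]

lemma view_cons {c₀ : Action} {w : List Action}
    (h : ∀ w₁ a w₂, w = w₁ ++ a :: w₂ → a.isPositive = false →
      (∀ b ∈ w₁, b.justifiesB a = false) → c₀.justifiesB a = true) :
    view (c₀ :: w) = c₀ :: view w := by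
  have hcond : ∀ u₁ a u₂, w.reverse = u₁ ++ a :: u₂ → a.isPositive = false →
      (∀ b ∈ u₂, b.justifiesB a = false) → c₀.justifiesB a = true := by
    intro u₁ a u₂ hw hneg hnone
    refine h u₂.reverse a u₁.reverse ?_ hneg fun b hb => hnone b (List.mem_reverse.mp hb)
    simpa using congrArg List.reverse hw
  simp only [view, viewRev, List.reverse_cons, List.length_append, List.length_reverse,
    List.length_cons, List.length_nil]
  rw [viewRevAux_append_singleton c₀ _ _ (by simp) hcond,
    viewRevAux_of_length_le (m := w.length) (by simp) (by simp)]
  simp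

lemma view_append_singleton (u : List Action) (a : Action) :
    ∃ w, view (u ++ [a]) = w ++ [a] ∧ w ⊆ u := by
  simp only [view, viewRev, List.reverse_append, List.reverse_cons, List.reverse_nil,
    List.nil_append, List.singleton_append, List.length_cons, List.length_reverse]
  cases hp : a.isPositive
  · rw [viewRevAux_cons_neg hp, List.reverse_cons]
    refine ⟨_, rfl, fun x hx => ?_⟩
    have := viewRevAux_subset _ _ (List.mem_reverse.mp hx)
    exact List.mem_reverse.mp ((List.dropWhile_sublist _).subset this)
  · rw [viewRevAux_cons_pos hp, List.reverse_cons]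
    exact ⟨_, rfl, fun x hx =>
      List.mem_reverse.mp (viewRevAux_subset _ _ (List.mem_reverse.mp hx))⟩

lemma view_append_singleton_of_isPositive (u : List Action) {a : Action}
    (ha : a.isPositive = true) : view (u ++ [a]) = view u ++ [a] := by
  simp [view, viewRev, viewRevAux_cons_pos ha]

lemma view_append_singleton_ne_nil (u : List Action) (a : Action) : view (u ++ [a]) ≠ [] := by
  obtain ⟨w, hw, -⟩ := view_append_singleton u a
  simp [hw]

lemma view_ne_nil {u : List Action} (h : u ≠ []) : view u ≠ [] := by
  obtain ⟨w, a, rfl⟩ := (List.eq_nil_or_concat u).resolve_left h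
  simpa using view_append_singleton_ne_nil w a

section SimpleBase

variable {ζ : Address} {pos : Bool}

lemma initial_simpleBase_iff {a : Action} :
    Initial (simpleBase ζ pos) a ↔ ∃ I, a = .proper pos ζ I := by
  cases pos <;> simp [Initial, simpleBase]

lemma simpleBase_isPositive_iff : (simpleBase ζ pos).isPositive ↔ pos = true := by
  cases pos <;> simp [Base.isPositive, simpleBase]

lemma eq_of_mem_simpleBase_right {σ : Sequent} {f : Address} (hσ : σ ∈ simpleBase ζ pos)
    (hf : f ∈ σ.right) : pos = true ∧ σ.left = none ∧ f = ζ := by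
  cases pos <;> simp_all [simpleBase]

lemma IsPath.head_spec {a : Action} {t : List Action} (h : IsPath (simpleBase ζ pos) (a :: t)) :
    a.isPositive = pos ∧ (a = .daimon ∨ ∃ I, a = .proper pos ζ I) := by
  cases pos
  · have ha : a ≠ .daimon := fun ha =>
      absurd (h.daimonFirst (by simp [ha])) (by simp [simpleBase_isPositive_iff])
    rcases h.justified [] a ⟨t, rfl⟩ ha with hin | ⟨b, hb, -⟩
    · obtain ⟨I, rfl⟩ := initial_simpleBase_iff.mp hin
      exact ⟨rfl, .inr ⟨I, rfl⟩⟩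
    · simp at hb
  · obtain ⟨a', t', he, hdisj⟩ := h.totality (simpleBase_isPositive_iff.mpr rfl)
    obtain ⟨rfl, rfl⟩ := List.cons_eq_cons.mp he
    rcases hdisj with rfl | ⟨hp, hin⟩
    · exact ⟨rfl, .inl rfl⟩
    · exact ⟨hp, .inr (initial_simpleBase_iff.mp hin)⟩

lemma IsPath.focus_extends_base {r : List Action} (h : IsPath (simpleBase ζ pos) r)
    {u : List Action} {a : Action} (hu : u ++ [a] <+: r) (ha : a ≠ .daimon) :
    ∃ f, a.focus? = some f ∧ ζ <+: f := by
  induction hn : u.length using Nat.strong_induction_on generalizing u a with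
  | _ n ih =>
  rcases h.justified u a hu ha with hin | ⟨b, hb, hj⟩
  · obtain ⟨I, rfl⟩ := initial_simpleBase_iff.mp hin
    exact ⟨ζ, rfl, List.prefix_refl ζ⟩
  · obtain ⟨u₁, u₂, rfl⟩ := List.append_of_mem hb
    obtain ⟨pb, η, I, pa, J, j, -, rfl, rfl⟩ := Action.justifies_iff.mp hj
    have hu₁ : u₁ ++ [.proper pb η I] <+: r :=
      (List.prefix_append _ _).trans (by simpa using hu)
    obtain ⟨f, hf, hζ⟩ := ih _ (by simp [← hn]) hu₁ (by simp) rfl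
    cases hf
    exact ⟨_, rfl, hζ.trans (List.prefix_append _ _)⟩

lemma IsPath.focus_ne_of_mem {ξ : Address} {i : ℕ} {r : List Action}
    (h : IsPath (simpleBase (ξ ++ [i]) pos) r) {a : Action} (ha : a ∈ r) :
    a.focus? ≠ some ξ := by
  intro hf
  obtain ⟨u₁, u₂, rfl⟩ := List.append_of_mem ha
  obtain ⟨f, hf', hpre⟩ := h.focus_extends_base (u := u₁) (a := a) ⟨u₂, by simp⟩
    (by rintro rfl; simp [Action.focus?] at hf)
  rw [hf] at hf'
  cases hf'
  simpa using hpre.length_le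

lemma focus_ne_of_mem_tail {r : List Action} {a a' : Action} {f : Address}
    (hlin : ((a' :: r).filterMap Action.focus?).Nodup) (ha' : a'.focus? = some f) (ha : a ∈ r) :
    a.focus? ≠ some f := by
  rw [List.filterMap_cons_some ha', List.nodup_cons] at hlin
  exact fun hf => hlin.1 (List.mem_filterMap.mpr ⟨a, ha, hf⟩)

lemma eq_nil_of_focus_eq_head {r u : List Action} {a a' : Action} {f : Address}
    (hlin : ((a' :: r).filterMap Action.focus?).Nodup) (hu : u ++ [a] <+: a' :: r)
    (ha : a.focus? = some f) (ha' : a'.focus? = some f) : u = [] := by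
  rcases append_singleton_prefix_cons_iff.mp hu with ⟨rfl, -⟩ | ⟨w', rfl, hw'⟩
  · rfl
  · exact absurd ha (focus_ne_of_mem_tail hlin ha' (mem_of_append_singleton_prefix hw'))

lemma IsPath.eq_nil_of_focus_eq_base {r u : List Action} {a : Action}
    (h : IsPath (simpleBase ζ pos) r) (hu : u ++ [a] <+: r) (ha : a.focus? = some ζ) :
    u = [] := by
  obtain ⟨a', r, rfl⟩ :=
    List.exists_cons_of_ne_nil (List.ne_nil_of_mem (mem_of_append_singleton_prefix hu))
  rcases h.head_spec.2 with rfl | ⟨I, rfl⟩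
  · have := h.daimonLast [] ⟨r, rfl⟩
    rcases append_singleton_prefix_cons_iff.mp hu with ⟨rfl, -⟩ | ⟨w', rfl, hw'⟩
    · rfl
    · simp only [List.nil_append, List.cons.injEq, true_and] at this
      simp [← this] at hw'
  · exact eq_nil_of_focus_eq_head h.linearity hu ha rfl

lemma isPath_singleton_proper (ζ : Address) (pos : Bool) (I : Finset ℕ) :
    IsPath (simpleBase ζ pos) [.proper pos ζ I] where
  alternating := List.isChain_singleton _
  justified w a hw _ := by
    obtain ⟨rfl, rfl⟩ := (append_singleton_prefix_cons_iff.mp hw).resolve_right (by simp)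
    exact .inl (initial_simpleBase_iff.mpr ⟨I, rfl⟩)
  negJump w a c hw _ hc _ := by
    obtain ⟨rfl, rfl⟩ := (append_singleton_prefix_cons_iff.mp hw).resolve_right (by simp)
    simp at hc
  posJump w a hw _ _ σ hσ := by
    rintro ⟨f, -, hf⟩
    obtain ⟨rfl, rfl⟩ := (append_singleton_prefix_cons_iff.mp hw).resolve_right (by simp)
    exact .inl ⟨rfl, (eq_of_mem_simpleBase_right hσ hf).2.1⟩
  linearity := by simp [Action.focus?]
  daimonLast w hw := by
    obtain ⟨-, h⟩ := (append_singleton_prefix_cons_iff.mp hw).resolve_right (by simp)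
    simp at h
  daimonFirst h := by simp at h
  totality h := by
    obtain rfl := simpleBase_isPositive_iff.mp h
    exact ⟨_, [], rfl, .inr ⟨rfl, initial_simpleBase_iff.mpr ⟨I, rfl⟩⟩⟩

end SimpleBase

def JustifiedSeq (ζ : Address) (s : List Action) : Prop :=
  ∀ s₁ a s₂, s = s₁ ++ a :: s₂ → a ≠ .daimon →
    (∃ b ∈ s₁, b.justifies a) ∨ a.focus? = some ζ

namespace JustifiedSeq

variable {ζ : Address} {s : List Action}

lemma nil : JustifiedSeq ζ [] := by
  intro s₁ a s₂ h
  simp at h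

lemma map_dual (h : JustifiedSeq ζ s) : JustifiedSeq ζ (s.map Action.dual) := by
  intro s₁ a s₂ hs ha
  have hs' : s = s₁.map Action.dual ++ a.dual :: s₂.map Action.dual := by
    simpa using congrArg (List.map Action.dual) hs
  rcases h _ _ _ hs' (by simpa using ha) with ⟨b, hb, hj⟩ | hf
  · obtain ⟨c, hc, rfl⟩ := List.mem_map.mp hb
    exact .inl ⟨c, hc, by simpa using hj⟩
  · exact .inr (by simpa using hf)

lemma concat (h : JustifiedSeq ζ s) {x : Action}
    (hx : x = .daimon ∨ x.focus? = some ζ ∨ ∃ b ∈ s, b.justifies x) :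
    JustifiedSeq ζ (s ++ [x]) := by
  intro s₁ a s₂ hs ha
  rcases eq_append_cons_of_append_singleton hs with ⟨rfl, rfl⟩ | ⟨s₂', hs'⟩
  · rcases hx with rfl | hf | hj
    · exact absurd rfl ha
    · exact .inr hf
    · exact .inl hj
  · exact h _ _ _ hs' ha

variable {pos : Bool}

lemma of_isPath_prefix {r : List Action} (hr : IsPath (simpleBase ζ pos) r) (hs : s <+: r) :
    JustifiedSeq ζ s := by
  intro s₁ a s₂ hs' ha
  subst hs'
  rcases hr.justified s₁ a ((List.prefix_append _ s₂).trans (by simpa using hs)) ha with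
    hin | hj
  · obtain ⟨I, rfl⟩ := initial_simpleBase_iff.mp hin
    exact .inr rfl
  · exact .inl hj

lemma concat_of_isPath_view (h : JustifiedSeq ζ s) {x : Action}
    (hp : IsPath (simpleBase ζ pos) (view (s ++ [x]))) : JustifiedSeq ζ (s ++ [x]) := by
  refine h.concat ?_
  by_cases hx : x = .daimon
  · exact .inl hx
  obtain ⟨w, hw, hws⟩ := view_append_singleton s x
  rw [hw] at hp
  rcases hp.justified w x (List.prefix_refl _) hx with hin | ⟨b, hb, hj⟩
  · obtain ⟨I, rfl⟩ := initial_simpleBase_iff.mp hin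
    exact .inr (.inl rfl)
  · exact .inr (.inr ⟨b, hws hb, hj⟩)

end JustifiedSeq

namespace Coherent

lemma symm {c d : List Action} (h : Coherent c d) : Coherent d c := by
  refine ⟨fun w κ₁ κ₂ h₁ h₂ => ?_,
    fun w ξ₁ I₁ w₁ σ₁ ξ₂ I₂ w₂ σ₂ h₁ h₂ hξ f hf₁ hf₂ => ?_⟩
  · rcases h.1 w κ₂ κ₁ h₂ h₁ with he | ⟨hn₂, hn₁⟩
    · exact .inl he.symm
    · exact .inr ⟨hn₁, hn₂⟩
  · exact h.2 w ξ₂ I₂ w₂ σ₂ ξ₁ I₁ w₁ σ₁ h₂ h₁ (Ne.symm hξ) f hf₂ hf₁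

lemma cons {c d : List Action} (h : Coherent c d) (a : Action) : Coherent (a :: c) (a :: d) := by
  refine ⟨fun w κ₁ κ₂ h₁ h₂ => ?_, fun w ξ₁ I₁ w₁ σ₁ ξ₂ I₂ w₂ σ₂ h₁ h₂ hξ => ?_⟩
  · cases w with
    | nil =>
      simp only [List.nil_append, List.singleton_prefix_cons_iff] at h₁ h₂
      exact .inl (h₁.trans h₂.symm)
    | cons e w =>
      simp only [List.cons_append, List.cons_prefix_cons] at h₁ h₂
      exact h.1 w κ₁ κ₂ h₁.2 h₂.2
  · cases w with
    | nil =>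
      simp only [List.nil_append, List.cons_append, List.cons_prefix_cons] at h₁ h₂
      exact absurd (Action.proper.inj (h₁.1.trans h₂.1.symm)).2.1 hξ
    | cons e w =>
      simp only [List.cons_append, List.cons_prefix_cons] at h₁ h₂
      exact h.2 w ξ₁ I₁ w₁ σ₁ ξ₂ I₂ w₂ σ₂ (by simpa using h₁.2) (by simpa using h₂.2)
        hξ

lemma of_cons {a : Action} {c d : List Action} (h : Coherent (a :: c) (a :: d)) :
    Coherent c d := by
  refine ⟨fun w κ₁ κ₂ h₁ h₂ => ?_, fun w ξ₁ I₁ w₁ σ₁ ξ₂ I₂ w₂ σ₂ h₁ h₂ => ?_⟩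
  · exact h.1 (a :: w) κ₁ κ₂ (List.cons_prefix_cons.mpr ⟨rfl, h₁⟩)
      (List.cons_prefix_cons.mpr ⟨rfl, h₂⟩)
  · exact h.2 (a :: w) ξ₁ I₁ w₁ σ₁ ξ₂ I₂ w₂ σ₂
      (List.cons_prefix_cons.mpr ⟨rfl, h₁⟩) (List.cons_prefix_cons.mpr ⟨rfl, h₂⟩)

end Coherent

lemma coherent_singleton_cons (a : Action) (d : List Action) : Coherent [a] (a :: d) := by
  refine ⟨fun w κ₁ κ₂ h₁ h₂ => ?_, fun w ξ₁ I₁ w₁ σ₁ ξ₂ I₂ w₂ σ₂ h₁ => ?_⟩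
  · obtain ⟨rfl, rfl⟩ := (append_singleton_prefix_cons_iff.mp h₁).resolve_right (by simp)
    exact .inl (List.singleton_prefix_cons_iff.mp h₂).symm
  · exact absurd h₁.length_le (by simp; omega)

lemma isChronicle_singleton_proper (ζ : Address) (pos : Bool) (I : Finset ℕ) :
    IsChronicle (simpleBase ζ pos) [.proper pos ζ I] :=
  ⟨isPath_singleton_proper ζ pos I, by simp, fun w a c h _ => by simpa using h.length_le⟩

/-- The paper's `a · D`. -/
def prefixBy (a : Action) (D : Set (List Action)) : Set (List Action) :=
  insert [a] {c | ∃ d ∈ D, c = a :: d}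

def residual (a : Action) (D : Set (List Action)) : Set (List Action) :=
  {c | c ≠ [] ∧ a :: c ∈ D}

lemma residual_prefixBy {a : Action} {D : Set (List Action)} (hD : ∀ c ∈ D, c ≠ []) :
    residual a (prefixBy a D) = D := by
  ext c
  constructor
  · rintro ⟨hne, h | ⟨d, hd, hdc⟩⟩
    · exact absurd (List.cons_eq_cons.mp h).2 hne
    · rwa [(List.cons_eq_cons.mp hdc).2]
  · exact fun hc => ⟨hD c hc, .inr ⟨c, hc, rfl⟩⟩

lemma IsDesign.ne_nil {β : Base} {D : Set (List Action)} (hD : IsDesign β D) :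
    ∀ c ∈ D, c ≠ [] :=
  fun c hc => (hD.chron c hc).2.1

section ProperCons

variable {ξ : Address} {i : ℕ} {b : Bool}

lemma view_proper_cons {w : List Action} (hJ : JustifiedSeq (ξ ++ [i]) w) :
    view (.proper b ξ {i} :: w) = .proper b ξ {i} :: view w := by
  refine view_cons fun w₁ a w₂ hw hneg hnone => ?_
  rcases hJ w₁ a w₂ hw (Action.ne_daimon_of_isPositive_eq_false hneg) with ⟨c, hc, hj⟩ | hf
  · exact absurd hj (by simp [Action.justifies, hnone c hc])
  · obtain ⟨pa, I, rfl⟩ : ∃ pa I, a = .proper pa (ξ ++ [i]) I := by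
      cases a <;> simp_all [Action.focus?]
    exact Action.proper_singleton_justifies_iff.mpr ⟨pa, I, rfl⟩

lemma view_proper_cons_append_singleton {w : List Action} {x : Action}
    (hJ : JustifiedSeq (ξ ++ [i]) w) (hx : x.isPositive = true) :
    view (.proper b ξ {i} :: (w ++ [x])) = .proper b ξ {i} :: view (w ++ [x]) := by
  rw [← List.cons_append, view_append_singleton_of_isPositive _ hx, view_proper_cons hJ,
    view_append_singleton_of_isPositive _ hx, List.cons_append]

lemma IsPath.proper_cons {q : List Action} (hq : IsPath (simpleBase (ξ ++ [i]) (!b)) q) :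
    IsPath (simpleBase ξ b) (.proper b ξ {i} :: q) where
  alternating := by
    cases q with
    | nil => exact List.isChain_singleton _
    | cons a t => exact List.isChain_cons_cons.mpr ⟨by simp [hq.head_spec.1], hq.alternating⟩
  justified w a hw ha := by
    rcases append_singleton_prefix_cons_iff.mp hw with ⟨rfl, rfl⟩ | ⟨w', rfl, hw'⟩
    · exact .inl (initial_simpleBase_iff.mpr ⟨_, rfl⟩)
    rcases hq.justified w' a hw' ha with hin | ⟨c, hc, hj⟩
    · obtain ⟨I, rfl⟩ := initial_simpleBase_iff.mp hin
      exact .inr ⟨_, List.mem_cons_self,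
        Action.proper_singleton_justifies_iff.mpr ⟨_, I, rfl⟩⟩
    · exact .inr ⟨c, List.mem_cons_of_mem _ hc, hj⟩
  negJump w a c hw hpos hc hj := by
    rcases append_singleton_prefix_cons_iff.mp hw with ⟨rfl, rfl⟩ | ⟨w', rfl, hw'⟩
    · simp at hc
    rw [view_proper_cons (JustifiedSeq.of_isPath_prefix hq ((List.prefix_append _ _).trans hw'))]
    rcases List.mem_cons.mp hc with rfl | hc
    · exact List.mem_cons_self
    · exact List.mem_cons_of_mem _ (hq.negJump w' a c hw' hpos hc hj)
  posJump w a hw _ _ σ hσ := by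
    rintro ⟨f, hf, hfr⟩
    obtain ⟨rfl, hleft, rfl⟩ := eq_of_mem_simpleBase_right hσ hfr
    rcases append_singleton_prefix_cons_iff.mp hw with ⟨rfl, -⟩ | ⟨w', rfl, hw'⟩
    · exact .inl ⟨rfl, hleft⟩
    · exact absurd hf (hq.focus_ne_of_mem (mem_of_append_singleton_prefix hw'))
  linearity := by
    rw [List.filterMap_cons_some (f := Action.focus?) rfl, List.nodup_cons]
    refine ⟨fun hmem => ?_, hq.linearity⟩
    obtain ⟨a, ha, hfa⟩ := List.mem_filterMap.mp hmem
    exact hq.focus_ne_of_mem ha hfa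
  daimonLast w hw := by
    rcases append_singleton_prefix_cons_iff.mp hw with ⟨rfl, h⟩ | ⟨w', rfl, hw'⟩
    · simp at h
    · rw [List.cons_append, hq.daimonLast w' hw']
  daimonFirst h := by simp at h
  totality h := by
    obtain rfl := simpleBase_isPositive_iff.mp h
    exact ⟨_, q, rfl, .inr ⟨rfl, initial_simpleBase_iff.mpr ⟨_, rfl⟩⟩⟩

lemma IsPath.proper_cons_head_spec {a : Action} {t : List Action}
    (h : IsPath (simpleBase ξ b) (.proper b ξ {i} :: a :: t)) :
    a.isPositive = !b ∧ (a = .daimon ∨ ∃ I, a = .proper (!b) (ξ ++ [i]) I) := by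
  have hpol : a.isPositive = !b := by
    have := (List.isChain_cons_cons.mp h.alternating).1
    cases hp : a.isPositive <;> cases b <;> simp_all
  refine ⟨hpol, ?_⟩
  by_cases hd : a = .daimon
  · exact .inl hd
  rcases h.justified [.proper b ξ {i}] a ⟨t, rfl⟩ hd with hin | ⟨c, hc, hj⟩
  · obtain ⟨I, rfl⟩ := initial_simpleBase_iff.mp hin
    cases b <;> simp [Action.isPositive] at hpol
  · obtain rfl := List.mem_singleton.mp hc
    obtain ⟨pa, I, rfl⟩ := Action.proper_singleton_justifies_iff.mp hj
    exact .inr ⟨I, by simp_all [Action.isPositive]⟩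

lemma IsPath.eq_nil_of_proper_cons {q w : List Action} {a : Action}
    (h : IsPath (simpleBase ξ b) (.proper b ξ {i} :: q)) (hw : w ++ [a] <+: q)
    (ha : a.focus? = some (ξ ++ [i])) : w = [] := by
  obtain ⟨a', q, rfl⟩ :=
    List.exists_cons_of_ne_nil (List.ne_nil_of_mem (mem_of_append_singleton_prefix hw))
  have hlin := h.linearity
  rw [List.filterMap_cons_some (f := Action.focus?) rfl, List.nodup_cons] at hlin
  rcases h.proper_cons_head_spec.2 with rfl | ⟨I, rfl⟩
  · have hq := h.daimonLast [_] ⟨q, rfl⟩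
    rcases append_singleton_prefix_cons_iff.mp hw with ⟨rfl, -⟩ | ⟨w', rfl, hw'⟩
    · rfl
    · obtain rfl : q = [] := by simpa [eq_comm] using hq
      simp at hw'
  · exact eq_nil_of_focus_eq_head hlin.2 hw ha rfl

lemma IsPath.justified_of_proper_cons {pos : Bool} {q w : List Action} {a : Action}
    (h : IsPath (simpleBase ξ pos) (.proper b ξ {i} :: q)) (hw : w ++ [a] <+: q)
    (ha : a ≠ .daimon) : (∃ c ∈ w, c.justifies a) ∨ a.focus? = some (ξ ++ [i]) := by
  have hpre : (.proper b ξ {i} :: w) ++ [a] <+: .proper b ξ {i} :: q :=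
    List.cons_prefix_cons.mpr ⟨rfl, hw⟩
  rcases h.justified _ a hpre ha with hin | ⟨c, hc, hj⟩
  · obtain ⟨I, rfl⟩ := initial_simpleBase_iff.mp hin
    exact absurd (eq_nil_of_focus_eq_head h.linearity hpre rfl rfl) (by simp)
  rcases List.mem_cons.mp hc with rfl | hc
  · obtain ⟨pa, I, rfl⟩ := Action.proper_singleton_justifies_iff.mp hj
    exact .inr rfl
  · exact .inl ⟨c, hc, hj⟩

lemma JustifiedSeq.of_isPath_proper_cons {pos : Bool} {q w : List Action}
    (h : IsPath (simpleBase ξ pos) (.proper b ξ {i} :: q)) (hw : w <+: q) :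
    JustifiedSeq (ξ ++ [i]) w := by
  rintro s₁ x s₂ rfl hx
  exact h.justified_of_proper_cons ((List.prefix_append _ s₂).trans (by simpa using hw)) hx

/-- For `b = false` the tail of `(-, ξ, {i}) :: q` lives on the positive base `⊢ ξi`, where
the empty sequence is not a path. -/
lemma IsPath.of_proper_cons {q : List Action} (h : IsPath (simpleBase ξ b) (.proper b ξ {i} :: q))
    (hq : q = [] → b = true) : IsPath (simpleBase (ξ ++ [i]) (!b)) q where
  alternating := h.alternating.tail
  justified w a hw ha := by
    rcases h.justified_of_proper_cons hw ha with hj | hf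
    · exact .inr hj
    obtain rfl := h.eq_nil_of_proper_cons hw hf
    obtain ⟨t, rfl⟩ := hw
    rcases h.proper_cons_head_spec.2 with rfl | ⟨I, rfl⟩
    · exact absurd rfl ha
    · exact .inl (initial_simpleBase_iff.mpr ⟨I, rfl⟩)
  negJump w a c hw hpos hc hj := by
    have hv := h.negJump (.proper b ξ {i} :: w) a c (List.cons_prefix_cons.mpr ⟨rfl, hw⟩) hpos
      (List.mem_cons_of_mem _ hc) hj
    rw [view_proper_cons (JustifiedSeq.of_isPath_proper_cons h ((List.prefix_append _ _).trans hw))]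
      at hv
    rcases List.mem_cons.mp hv with rfl | hv
    · exact absurd rfl (focus_ne_of_mem_tail h.linearity rfl
        (((List.prefix_append _ _).trans hw).subset hc))
    · exact hv
  posJump w a hw _ _ σ hσ := by
    rintro ⟨f, hf, hfr⟩
    obtain ⟨-, hleft, rfl⟩ := eq_of_mem_simpleBase_right hσ hfr
    exact .inl ⟨h.eq_nil_of_proper_cons hw hf, hleft⟩
  linearity := by
    have hlin := h.linearity
    rw [List.filterMap_cons_some (f := Action.focus?) rfl, List.nodup_cons] at hlin
    exact hlin.2
  daimonLast w hw := by
    simpa using h.daimonLast (.proper b ξ {i} :: w) (List.cons_prefix_cons.mpr ⟨rfl, hw⟩)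
  daimonFirst hd := by
    cases q with
    | nil => simp at hd
    | cons a t =>
      obtain rfl : a = .daimon := by simpa using hd
      exact simpleBase_isPositive_iff.mpr (by simpa using h.proper_cons_head_spec.1)
  totality hpos := by
    have hb := simpleBase_isPositive_iff.mp hpos
    cases q with
    | nil => simp [hq rfl] at hb
    | cons a t =>
    obtain ⟨hpol, ha⟩ := h.proper_cons_head_spec
    refine ⟨a, t, rfl, ?_⟩
    rcases ha with rfl | ⟨I, rfl⟩
    · exact .inl rfl
    · exact .inr ⟨hpol.trans hb, initial_simpleBase_iff.mpr ⟨I, rfl⟩⟩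

lemma IsChronicle.proper_cons {d : List Action}
    (hd : IsChronicle (simpleBase (ξ ++ [i]) (!b)) d) :
    IsChronicle (simpleBase ξ b) (.proper b ξ {i} :: d) := by
  refine ⟨hd.1.proper_cons, by simp, fun w a c hw hneg => ?_⟩
  cases w with
  | nil =>
    obtain ⟨rfl, t, rfl⟩ : a = .proper b ξ {i} ∧ [c] <+: d := by
      simpa [List.cons_prefix_cons] using hw
    simp only [List.singleton_append] at hd
    rcases hd.1.head_spec.2 with rfl | ⟨I, rfl⟩
    · simp at hneg
    · exact .inr (Action.proper_singleton_justifies_iff.mpr ⟨_, I, rfl⟩)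
  | cons e w =>
    obtain ⟨-, hw⟩ := List.cons_prefix_cons.mp hw
    rcases hd.2.2 w a c hw hneg with hin | hj
    · obtain ⟨I, rfl⟩ := initial_simpleBase_iff.mp hin
      simpa using hd.1.eq_nil_of_focus_eq_base (u := w ++ [a]) (by simpa using hw) rfl
    · exact .inr hj

lemma IsChronicle.of_proper_cons {d : List Action}
    (hd : IsChronicle (simpleBase ξ b) (.proper b ξ {i} :: d)) (hne : d ≠ []) :
    IsChronicle (simpleBase (ξ ++ [i]) (!b)) d := by
  refine ⟨hd.1.of_proper_cons (absurd · hne), hne, fun w a c hw hneg => ?_⟩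
  rcases hd.2.2 (.proper b ξ {i} :: w) a c (List.cons_prefix_cons.mpr ⟨rfl, hw⟩) hneg with
    hin | hj
  · obtain ⟨I, rfl⟩ := initial_simpleBase_iff.mp hin
    exact absurd rfl (focus_ne_of_mem_tail hd.1.linearity rfl
      (hw.subset (by simp : Action.proper b ξ I ∈ w ++ [a, .proper b ξ I])))
  · exact .inr hj

lemma IsDesign.prefixBy {D : Set (List Action)} (hD : IsDesign (simpleBase (ξ ++ [i]) (!b)) D) :
    IsDesign (simpleBase ξ b) (prefixBy (.proper b ξ {i}) D) where
  chron := by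
    rintro c (rfl | ⟨d, hd, rfl⟩)
    · exact isChronicle_singleton_proper ξ b {i}
    · exact (hD.chron d hd).proper_cons
  prefixClosed := by
    rintro c (rfl | ⟨d, hd, rfl⟩) e he hne <;>
      rcases List.prefix_cons_iff.mp he with rfl | ⟨t, rfl, ht⟩
    · exact absurd rfl hne
    · exact .inl (by rw [List.prefix_nil.mp ht])
    · exact absurd rfl hne
    · rcases eq_or_ne t [] with rfl | htne
      · exact .inl rfl
      · exact .inr ⟨t, hD.prefixClosed d hd t ht htne, rfl⟩
  coherent := by
    rintro c (rfl | ⟨d, hd, rfl⟩) e (rfl | ⟨d', hd', rfl⟩)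
    · exact coherent_singleton_cons _ []
    · exact coherent_singleton_cons _ _
    · exact (coherent_singleton_cons _ _).symm
    · exact (hD.coherent d hd d' hd').cons _
  maxPos := by
    rintro c (rfl | ⟨d, hd, rfl⟩) hmax
    · cases b
      · obtain ⟨c₀, hc₀⟩ := hD.posNonempty (simpleBase_isPositive_iff.mpr rfl)
        obtain ⟨a, t, rfl⟩ := List.exists_cons_of_ne_nil (hD.ne_nil c₀ hc₀)
        exact (hmax a (.inr ⟨[a], hD.prefixClosed _ hc₀ [a] ⟨t, rfl⟩ (by simp), rfl⟩)).elim
      · exact ⟨_, rfl, rfl⟩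
    · obtain ⟨a, ha, hpa⟩ :=
        hD.maxPos d hd fun κ hκ => hmax κ (.inr ⟨d ++ [κ], hκ, rfl⟩)
      exact ⟨a, by rwa [List.getLast?_cons_of_ne_nil (hD.ne_nil d hd)], hpa⟩
  posNonempty _ := ⟨_, .inl rfl⟩

lemma IsDesign.residual {D : Set (List Action)} (hD : IsDesign (simpleBase ξ b) D)
    (hk : [.proper b ξ {i}] ∈ D) :
    IsDesign (simpleBase (ξ ++ [i]) (!b)) (residual (.proper b ξ {i}) D) where
  chron := fun c ⟨hne, hc⟩ => (hD.chron _ hc).of_proper_cons hne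
  prefixClosed := fun c ⟨_, hc⟩ e he hne =>
    ⟨hne, hD.prefixClosed _ hc _ (List.cons_prefix_cons.mpr ⟨rfl, he⟩) (by simp)⟩
  coherent := fun c ⟨_, hc⟩ e ⟨_, he⟩ => (hD.coherent _ hc _ he).of_cons
  maxPos := by
    rintro c ⟨hne, hc⟩ hmax
    obtain ⟨a, ha, hpa⟩ :=
      hD.maxPos _ hc fun κ hκ => hmax κ ⟨by simp, by simpa using hκ⟩
    exact ⟨a, by rwa [List.getLast?_cons_of_ne_nil hne] at ha, hpa⟩
  posNonempty hpos := by
    obtain rfl : b = false := by simpa using simpleBase_isPositive_iff.mp hpos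
    by_contra hempty
    obtain ⟨a, ha, hpa⟩ :=
      hD.maxPos _ hk fun κ hκ => hempty ⟨[κ], by simp, by simpa using hκ⟩
    simp at ha
    simp [← ha] at hpa

lemma view_proper_cons_mem_prefixBy {D : Set (List Action)} {w : List Action}
    (hJ : JustifiedSeq (ξ ++ [i]) w) (h : view w ∈ D) :
    view (.proper b ξ {i} :: w) ∈ prefixBy (.proper b ξ {i}) D := by
  rw [view_proper_cons hJ]
  exact .inr ⟨_, h, rfl⟩

lemma view_mem_residual {D : Set (List Action)} {w : List Action}
    (hJ : JustifiedSeq (ξ ++ [i]) w) (hw : w ≠ []) (h : view (.proper b ξ {i} :: w) ∈ D) :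
    view w ∈ residual (.proper b ξ {i}) D := by
  rw [view_proper_cons hJ] at h
  exact ⟨view_ne_nil hw, h⟩

lemma PathOf.proper_cons {D : Set (List Action)} {q : List Action}
    (h : PathOf (simpleBase (ξ ++ [i]) (!b)) D q) :
    PathOf (simpleBase ξ b) (prefixBy (.proper b ξ {i}) D) (.proper b ξ {i} :: q) := by
  refine ⟨h.1.proper_cons, fun r hr hrne => ?_⟩
  rcases List.prefix_cons_iff.mp hr with rfl | ⟨r', rfl, hr'⟩
  · exact absurd rfl hrne
  rcases eq_or_ne r' [] with rfl | hne
  · simp [prefixBy]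
  · exact view_proper_cons_mem_prefixBy (JustifiedSeq.of_isPath_prefix h.1 hr') (h.2 r' hr' hne)

lemma PathOf.of_proper_cons {D : Set (List Action)} {q : List Action}
    (h : PathOf (simpleBase ξ b) D (.proper b ξ {i} :: q)) (hq : q = [] → b = true) :
    PathOf (simpleBase (ξ ++ [i]) (!b)) (residual (.proper b ξ {i}) D) q :=
  ⟨h.1.of_proper_cons hq, fun r hr hrne =>
    view_mem_residual (JustifiedSeq.of_isPath_proper_cons h.1 hr) hrne
      (h.2 _ (List.cons_prefix_cons.mpr ⟨rfl, hr⟩) (by simp))⟩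

end ProperCons

section Simulation

variable {ξ : Address} {i : ℕ}

lemma JustifiedSeq.concat_of_view_proper_cons_mem {b : Bool} {G : Set (List Action)}
    {w : List Action} {x : Action} (hJ : JustifiedSeq (ξ ++ [i]) w) (hx : x.isPositive = true)
    (hG : IsDesign (simpleBase ξ b) G) (h : view (.proper b ξ {i} :: (w ++ [x])) ∈ G) :
    JustifiedSeq (ξ ++ [i]) (w ++ [x]) := by
  rw [view_proper_cons_append_singleton hJ hx] at h
  exact hJ.concat_of_isPath_view
    ((hG.chron _ h).of_proper_cons (view_append_singleton_ne_nil _ _)).1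

lemma turnD_append_singleton {dpos : Prop} (s : List Action) (a : Action) :
    TurnD dpos (s ++ [a]) ↔ a.isPositive = false := by
  simp [TurnD]

lemma turnD_proper_cons_map_dual {s : List Action} (hs : Action.daimon ∉ s) :
    TurnD True (.proper true ξ {i} :: s.map Action.dual) ↔ ¬ TurnD True s := by
  rcases List.eq_nil_or_concat s with rfl | ⟨t, a, rfl⟩
  · simp [TurnD]
  · have ha : a ≠ .daimon := fun h => hs (by simp [h])
    rw [List.concat_eq_append, List.map_append, ← List.cons_append, List.map_singleton,
      turnD_append_singleton, turnD_append_singleton, Action.isPositive_dual ha]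
    cases a.isPositive <;> simp

lemma daimon_not_mem_append_singleton {s : List Action} {a : Action} (hs : Action.daimon ∉ s)
    (ha : a ≠ .daimon) : Action.daimon ∉ s ++ [a] := by
  simpa [hs] using ha.symm

theorem Conv.prefixBy_of_justifiedSeq {Ds Rs : Set (List Action)}
    (hDs : IsDesign (simpleBase (ξ ++ [i]) true) Ds) {s : List Action} (h : Conv Ds Rs True s)
    (hnd : Action.daimon ∉ s) (hJ : JustifiedSeq (ξ ++ [i]) s) :
    Conv (prefixBy (.proper true ξ {i}) Rs) (prefixBy (.proper false ξ {i}) Ds) True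
      (.proper true ξ {i} :: s.map Action.dual) := by
  induction h with
  | daiD hturn hv =>
    refine .daiR (by rw [turnD_proper_cons_map_dual hnd]; exact not_not_intro hturn) ?_
    simpa using view_proper_cons_mem_prefixBy (b := false) (hJ.concat (.inl rfl)) hv
  | daiR hturn hv =>
    refine .daiD (by rw [turnD_proper_cons_map_dual hnd]; exact hturn) ?_
    simpa using view_proper_cons_mem_prefixBy (b := true) (hJ.map_dual.concat (.inl rfl)) hv
  | stepD hturn hκp hκd hvD hvR _ ih =>
    have hJ' := hJ.concat_of_isPath_view (hDs.chron _ hvD).1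
    refine .stepR (by rw [turnD_proper_cons_map_dual hnd]; exact not_not_intro hturn)
      (by rw [Action.isPositive_dual hκd, hκp]; rfl) ?_ ?_ ?_
    · simpa using view_proper_cons_mem_prefixBy (b := false) hJ' hvD
    · simpa using view_proper_cons_mem_prefixBy (b := true) hJ'.map_dual hvR
    · simpa using ih (daimon_not_mem_append_singleton hnd hκd) hJ'
  | stepR hturn hκn hvR hvD _ ih =>
    have hκd := Action.ne_daimon_of_isPositive_eq_false hκn
    have hJ' := hJ.concat_of_isPath_view (hDs.chron _ hvD).1
    refine .stepD (by rw [turnD_proper_cons_map_dual hnd]; exact hturn)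
      (by rw [Action.isPositive_dual hκd, hκn]; rfl) (by simpa using hκd) ?_ ?_ ?_
    · simpa using view_proper_cons_mem_prefixBy (b := true) hJ'.map_dual hvR
    · simpa using view_proper_cons_mem_prefixBy (b := false) hJ' hvD
    · simpa using ih (daimon_not_mem_append_singleton hnd hκd) hJ'

theorem conv_prefixBy {Ds Rs : Set (List Action)} (hDs : IsDesign (simpleBase (ξ ++ [i]) true) Ds)
    (h : Conv Ds Rs True []) :
    Conv (prefixBy (.proper true ξ {i}) Rs) (prefixBy (.proper false ξ {i}) Ds) True [] :=
  .stepD (s := []) (κ := .proper true ξ {i}) trivial rfl (by simp) (by simp [prefixBy])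
    (by simp [prefixBy])
    (by simpa using h.prefixBy_of_justifiedSeq hDs (by simp) .nil)

theorem Conv.residual_of_justifiedSeq {Db Rb : Set (List Action)}
    (hDb : IsDesign (simpleBase ξ true) Db)
    (hRb : IsDesign (simpleBase ξ false) Rb) {S : List Action} (h : Conv Db Rb True S) :
    ∀ s, S = .proper true ξ {i} :: s.map Action.dual → Action.daimon ∉ s →
      JustifiedSeq (ξ ++ [i]) s →
      Conv (residual (.proper false ξ {i}) Rb) (residual (.proper true ξ {i}) Db) True s := by
  induction h with
  | daiD hturn hv =>
    rintro s rfl hnd hJ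
    refine .daiR ((turnD_proper_cons_map_dual hnd).mp hturn) ?_
    exact view_mem_residual (hJ.map_dual.concat (.inl rfl)) (by simp) (by simpa using hv)
  | daiR hturn hv =>
    rintro s rfl hnd hJ
    refine .daiD (not_not.mp (mt (turnD_proper_cons_map_dual hnd).mpr hturn)) ?_
    exact view_mem_residual (hJ.concat (.inl rfl)) (by simp) (by simpa using hv)
  | @stepD _ κ hturn hκp hκd hvD hvR _ ih =>
    rintro s rfl hnd hJ
    have hJd := hJ.map_dual.concat_of_view_proper_cons_mem hκp hDb (by simpa using hvD)
    have hJ' : JustifiedSeq (ξ ++ [i]) (s ++ [κ.dual]) := by simpa using hJd.map_dual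
    refine .stepR ((turnD_proper_cons_map_dual hnd).mp hturn)
      (by rw [Action.isPositive_dual hκd, hκp]; rfl) ?_ ?_ ?_
    · simpa using view_mem_residual hJd (by simp) (by simpa using hvD)
    · exact view_mem_residual hJ' (by simp) (by simpa using hvR)
    · exact ih _ (by simp) (daimon_not_mem_append_singleton hnd (by simpa using hκd)) hJ'
  | @stepR _ κ hturn hκn hvR hvD _ ih =>
    rintro s rfl hnd hJ
    have hκd := Action.ne_daimon_of_isPositive_eq_false hκn
    have hκp : κ.dual.isPositive = true := by rw [Action.isPositive_dual hκd, hκn]; rfl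
    have hJ' := hJ.concat_of_view_proper_cons_mem hκp hRb (by simpa using hvR)
    refine .stepD (not_not.mp (mt (turnD_proper_cons_map_dual hnd).mpr hturn)) hκp
      (by simpa using hκd) ?_ ?_ ?_
    · exact view_mem_residual hJ' (by simp) (by simpa using hvR)
    · simpa using view_mem_residual hJ'.map_dual (by simp) (by simpa using hvD)
    · exact ih _ (by simp) (daimon_not_mem_append_singleton hnd (by simpa using hκd)) hJ'

theorem conv_residual {Db Rb : Set (List Action)} (hDb : IsDesign (simpleBase ξ true) Db)
    (hRb : IsDesign (simpleBase ξ false) Rb)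
    (hfirst : ∀ x, [x] ∈ Db → x = .proper true ξ {i})
    (h : Conv Db Rb True []) :
    Conv (residual (.proper false ξ {i}) Rb) (residual (.proper true ξ {i}) Db) True [] := by
  cases h with
  | daiD _ hv => exact absurd (hfirst _ (by simpa using hv)) (by simp)
  | daiR hturn _ => exact absurd trivial hturn
  | stepD _ _ _ hvD _ hconv =>
    obtain rfl := hfirst _ (by simpa using hvD)
    exact hconv.residual_of_justifiedSeq hDb hRb [] (by simp) (by simp) .nil
  | stepR hturn => exact absurd trivial hturn

end Simulation

lemma dualSeq_cons {a : Action} (ha : a ≠ .daimon) (q : List Action) :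
    dualSeq (a :: q) = a.dual :: dualSeq q := by
  rcases eq_or_ne q [] with rfl | hq
  · simp [dualSeq, ha]
  · simp only [dualSeq, List.getLast?_cons_of_ne_nil hq, List.dropLast_cons_of_ne_nil hq]
    split_ifs <;> simp

lemma eq_of_dualSeq_eq_nil {q : List Action} (h : dualSeq q = []) : q = [.daimon] := by
  unfold dualSeq at h
  split_ifs at h with hq
  · obtain ⟨ys, rfl⟩ := List.getLast?_eq_some_iff.mp hq
    simpa using h
  · simp at h

lemma isPath_nil_simpleBase_false (ζ : Address) : IsPath (simpleBase ζ false) [] where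
  alternating := List.isChain_nil
  justified _ _ h := by simp at h
  negJump _ _ _ h := by simp at h
  posJump _ _ h := by simp at h
  linearity := List.nodup_nil
  daimonLast _ h := by simp at h
  daimonFirst h := by simp at h
  totality h := by simp [simpleBase_isPositive_iff] at h

lemma isPath_daimon (ζ : Address) : IsPath (simpleBase ζ true) [.daimon] where
  alternating := List.isChain_singleton _
  justified w a hw ha := by
    obtain ⟨rfl, rfl⟩ := (append_singleton_prefix_cons_iff.mp hw).resolve_right (by simp)
    exact absurd rfl ha
  negJump w a c hw _ hc _ := by
    obtain ⟨rfl, rfl⟩ := (append_singleton_prefix_cons_iff.mp hw).resolve_right (by simp)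
    simp at hc
  posJump w a hw _ ha := by
    obtain ⟨rfl, rfl⟩ := (append_singleton_prefix_cons_iff.mp hw).resolve_right (by simp)
    exact absurd rfl ha
  linearity := List.nodup_nil
  daimonLast w hw := by
    obtain ⟨rfl, -⟩ := (append_singleton_prefix_cons_iff.mp hw).resolve_right (by simp)
    rfl
  daimonFirst _ := simpleBase_isPositive_iff.mpr rfl
  totality _ := ⟨_, [], rfl, .inl rfl⟩

lemma isDesign_daiDesign (ζ : Address) : IsDesign (simpleBase ζ true) DaiDesign where
  chron := by
    rintro c rfl
    exact ⟨isPath_daimon ζ, by simp, fun w a c h _ => by simpa using h.length_le⟩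
  prefixClosed := by
    rintro c rfl d hd hne
    rcases List.prefix_cons_iff.mp hd with rfl | ⟨t, rfl, ht⟩
    · exact absurd rfl hne
    · rw [List.prefix_nil.mp ht]
      rfl
  coherent := by
    rintro c rfl e rfl
    exact coherent_singleton_cons _ []
  maxPos := by
    rintro c rfl -
    exact ⟨_, rfl, rfl⟩
  posNonempty _ := ⟨_, rfl⟩

lemma conv_daiDesign (R : Set (List Action)) : Conv DaiDesign R True [] :=
  .daiD trivial (by simp [DaiDesign])

lemma IsDesign.eq_of_singleton_mem {ζ : Address} {D : Set (List Action)} {x y : Action}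
    (hD : IsDesign (simpleBase ζ true) D) (hx : [x] ∈ D) (hy : [y] ∈ D) : x = y := by
  rcases (hD.coherent _ hx _ hy).1 [] x y (by simp) (by simp) with he | ⟨hneg, -⟩
  · exact he
  · simp [(hD.chron _ hx).1.head_spec.1] at hneg

lemma eq_of_singleton_mem_prefixBy {a x : Action} {D : Set (List Action)}
    (hx : [x] ∈ prefixBy a D) : x = a := by
  rcases hx with h | ⟨d, -, h⟩ <;> simp_all

section Shift

variable {ξ : Address} {i : ℕ} {N : Behaviour (ξ ++ [i]) false} {C : Behaviour ξ true}
  {D E P : Set (List Action)}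

lemma daiDesign_mem_orthSet : DaiDesign ∈ orthSet (ξ ++ [i]) false N.designs :=
  ⟨isDesign_daiDesign _, fun D _ => conv_daiDesign D⟩

lemma prefixBy_mem_orthSet_shiftD (hP : P ∈ orthSet (ξ ++ [i]) false N.designs) :
    prefixBy (.proper false ξ {i}) P ∈ orthSet ξ true (shiftD ξ i '' N.designs) := by
  refine ⟨hP.1.prefixBy, ?_⟩
  rintro _ ⟨D, hD, rfl⟩
  exact conv_prefixBy hP.1 (hP.2 D hD)

namespace IsShiftOf

lemma prefixBy_mem_orthSet (h : IsShiftOf ξ i C N)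
    (hP : P ∈ orthSet (ξ ++ [i]) false N.designs) :
    prefixBy (.proper false ξ {i}) P ∈ orthSet ξ true C.designs :=
  ⟨hP.1.prefixBy, fun _ hD => (h ▸ hD).2 _ (prefixBy_mem_orthSet_shiftD hP)⟩

lemma shiftD_mem (h : IsShiftOf ξ i C N) (hD : D ∈ N.designs) : shiftD ξ i D ∈ C.designs := by
  rw [h]
  exact ⟨(N.isDesign D hD).prefixBy, fun E hE => hE.2 _ ⟨D, hD, rfl⟩⟩

lemma daiDesign_mem (h : IsShiftOf ξ i C N) : DaiDesign ∈ C.designs := by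
  rw [h]
  exact ⟨isDesign_daiDesign ξ, fun E _ => conv_daiDesign E⟩

/-- Orthogonality to `(-, ξ, {i}) · ✠` forces the first action. -/
lemma eq_daimon_or_proper_of_singleton_mem (h : IsShiftOf ξ i C N) (hD : D ∈ C.designs)
    {x : Action} (hx : [x] ∈ D) :
    x = .daimon ∨ x = .proper true ξ {i} := by
  have hDd := C.isDesign D hD
  cases (h ▸ hD).2 _ (prefixBy_mem_orthSet_shiftD daiDesign_mem_orthSet) with
  | daiD _ hv => exact .inl (hDd.eq_of_singleton_mem hx (by simpa using hv))
  | daiR hturn _ => exact absurd trivial hturn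
  | @stepD _ κ _ _ _ hvD hvR _ =>
    have hκ : κ.dual = .proper false ξ {i} := eq_of_singleton_mem_prefixBy (by simpa using hvR)
    refine .inr ((hDd.eq_of_singleton_mem hx (by simpa using hvD)).trans ?_)
    simpa using congrArg Action.dual hκ
  | stepR hturn => exact absurd trivial hturn

lemma residual_mem (h : IsShiftOf ξ i C N) (hD : D ∈ C.designs) (hk : [.proper true ξ {i}] ∈ D) :
    residual (.proper true ξ {i}) D ∈ N.designs := by
  have hDd := C.isDesign D hD
  rw [N.closed]
  refine ⟨hDd.residual hk, fun P hP => ?_⟩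
  have hconv := conv_residual hDd hP.1.prefixBy (fun x hx => hDd.eq_of_singleton_mem hx hk)
    ((h ▸ hD).2 _ (prefixBy_mem_orthSet_shiftD hP))
  rwa [residual_prefixBy hP.1.ne_nil] at hconv

lemma residual_mem_orthSet (h : IsShiftOf ξ i C N) (hE : E ∈ orthSet ξ true C.designs)
    (hk : [.proper false ξ {i}] ∈ E) :
    residual (.proper false ξ {i}) E ∈ orthSet (ξ ++ [i]) false N.designs := by
  refine ⟨hE.1.residual hk, fun D hD => ?_⟩
  have hconv := conv_residual (N.isDesign D hD).prefixBy hE.1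
    (fun _ => eq_of_singleton_mem_prefixBy) (hE.2 _ (h.shiftD_mem hD))
  rwa [residual_prefixBy (N.isDesign D hD).ne_nil] at hconv

lemma visitable_daimon (h : IsShiftOf ξ i C N) : Visitable C [.daimon] := by
  refine ⟨DaiDesign, h.daiDesign_mem, _, h.prefixBy_mem_orthSet daiDesign_mem_orthSet,
    ⟨isPath_daimon ξ, fun r hr hne => ?_⟩,
    ⟨by simpa [dualSeq] using isPath_nil_simpleBase_false ξ, fun r hr hne => ?_⟩⟩
  · rcases List.prefix_cons_iff.mp hr with rfl | ⟨t, rfl, ht⟩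
    · exact absurd rfl hne
    · simp [List.prefix_nil.mp ht, DaiDesign]
  · exact absurd (List.prefix_nil.mp (by simpa [dualSeq] using hr)) hne

lemma visitable_proper_cons (h : IsShiftOf ξ i C N) {q : List Action} (hq : Visitable N q) :
    Visitable C (.proper true ξ {i} :: q) := by
  obtain ⟨D, hD, P, hP, hqD, hqP⟩ := hq
  refine ⟨_, h.shiftD_mem hD, _, h.prefixBy_mem_orthSet hP, hqD.proper_cons, ?_⟩
  rw [dualSeq_cons (by simp)]
  exact hqP.proper_cons

lemma visitable_of_visitable_proper_cons (h : IsShiftOf ξ i C N) {q : List Action}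
    (hp : Visitable C (.proper true ξ {i} :: q)) : Visitable N q := by
  obtain ⟨D, hD, E, hE, hpD, hpE⟩ := hp
  rw [dualSeq_cons (by simp)] at hpE
  have hkD : [.proper true ξ {i}] ∈ D := by simpa using hpD.2 [_] (by simp) (by simp)
  have hkE : [.proper false ξ {i}] ∈ E := by simpa using hpE.2 [_] (by simp) (by simp)
  refine ⟨_, h.residual_mem hD hkD, _, h.residual_mem_orthSet hE hkE,
    hpD.of_proper_cons fun _ => rfl, hpE.of_proper_cons fun hq => ?_⟩
  obtain rfl := eq_of_dualSeq_eq_nil hq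
  simpa using hpD.1.proper_cons_head_spec.1

lemma eq_daimon_or_proper_cons_of_visitable (h : IsShiftOf ξ i C N) {p : List Action}
    (hp : Visitable C p) :
    p = [.daimon] ∨ ∃ q, Visitable N q ∧ p = .proper true ξ {i} :: q := by
  obtain ⟨D, hD, _, -, hpD, hpE⟩ := id hp
  cases p with
  | nil =>
    exact absurd (hpE.1.daimonFirst (by simp [dualSeq])) (by simp [simpleBase_isPositive_iff])
  | cons a q =>
    have ha : [a] ∈ D := by simpa using hpD.2 [a] (by simp) (by simp)
    rcases h.eq_daimon_or_proper_of_singleton_mem hD ha with rfl | rfl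
    · exact .inl (hpD.1.daimonLast [] ⟨q, rfl⟩).symm
    · exact .inr ⟨q, h.visitable_of_visitable_proper_cons hp, rfl⟩

end IsShiftOf

end Shift

/-- visitable paths of a shift:
`V_{↑A} = {✠} ∪ (+,ξ,{i})·V_A`. -/
theorem visitable_shift (ξ : Address) (i : ℕ)
    (N : Behaviour (ξ ++ [i]) false) (C : Behaviour ξ true)
    (h : IsShiftOf ξ i C N) :
    {p | Visitable C p} =
      insert [Action.daimon]
        {p | ∃ q, Visitable N q ∧ p = Action.proper true ξ {i} :: q} := by
  ext p
  refine ⟨h.eq_daimon_or_proper_cons_of_visitable, ?_⟩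
  rintro (rfl | ⟨q, hq, rfl⟩)
  · exact h.visitable_daimon
  · exact h.visitable_proper_cons hq

end Ludics
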